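/- Identify F₃ = {−1,0,1} and let E = F₃ × F₃, with A_i = {(x,i)}, B_j = {(j,y)}, C_i = {(x,y) : x − y = i}, D_j = {(x,y) : x + y = j}. Let 𝒞 be a family of 5-element subsets of E such that any two distinct members of 𝒞 intersect in at most 3 elements, A_i ∪ B_j ∈ 𝒞 for every (i,j) ≠ (0,0), and the five sets C₀ ∪ D_{−1}, C₀ ∪ D₀, C₀ ∪ D₁, A₁ ∪ B₁, ((A₀ ∪ B₀) ∖ {(0,0)}) ∪ {(1,1)} all belong to 𝒞. Let f be the rank function of the sparse paving matroid of rank 5 with circuit-hyperplane family 𝒞, and define the contraction h on subsets of E ∖ {(1,1)} by h(X) = f(X ∪ {(1,1)}) − 1. Then the four 2-element sets L₀ = {(0,−1),(−1,0)}, L₁ = {(0,1),(1,0)}, L₂ = {(−1,−1),(0,0)}, L₃ = {(1,−1),(−1,1)} form a Vámos configuration in h: h(Lᵢ) = 2 for each i; h(L₀∪L₁) = h(L₀∪L₂) = h(L₁∪L₂) = h(L₁∪L₃) = h(L₂∪L₃) = 3; h(L₀∪L₃) = 4; and h of every union of three or all four of them equals 4. In particular, such matroids are not almost entropic. -/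

import Mathlib

/-!
Write `p = (1,1)`. Each `Lᵢ ∪ {p}` has three points, so `h(Lᵢ) = 2`. For the five pairs other
than `{L₀, L₃}`, the set `Lᵢ ∪ Lⱼ ∪ {p}` is exactly one of the five listed circuit-hyperplanes,
so `h(Lᵢ ∪ Lⱼ) = 3`. The set `L₀ ∪ L₃ ∪ {p}` meets the circuit-hyperplane `A₋₁ ∪ B₋₁` in four
points, so it is not a circuit-hyperplane and `h(L₀ ∪ L₃) = 4`. Unions of three or four of the
`Lᵢ` together with `p` have at least six points, hence full rank.
-/

open Finset

/-- The sets `L₀, L₁, L₂, L₃` form a Vámos configuration in the polymatroid `h`. -/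
def IsVamosConfig {α : Type*} [DecidableEq α] (h : Finset α → ℝ)
    (L₀ L₁ L₂ L₃ : Finset α) : Prop :=
  h L₀ = 2 ∧ h L₁ = 2 ∧ h L₂ = 2 ∧ h L₃ = 2 ∧
  h (L₀ ∪ L₁) = 3 ∧ h (L₀ ∪ L₂) = 3 ∧ h (L₁ ∪ L₂) = 3 ∧
  h (L₁ ∪ L₃) = 3 ∧ h (L₂ ∪ L₃) = 3 ∧ h (L₀ ∪ L₃) = 4 ∧
  h (L₀ ∪ L₁ ∪ L₂) = 4 ∧ h (L₀ ∪ L₁ ∪ L₃) = 4 ∧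
  h (L₀ ∪ L₂ ∪ L₃) = 4 ∧ h (L₁ ∪ L₂ ∪ L₃) = 4 ∧
  h (L₀ ∪ L₁ ∪ L₂ ∪ L₃) = 4

/-- The points of the affine plane over `F₃`. -/
abbrev Pt := ZMod 3 × ZMod 3

/-- The horizontal line `A_i = {(x, i) : x ∈ F₃}`. -/
def lineA (i : ZMod 3) : Finset Pt := Finset.univ.image (fun x => (x, i))

/-- The vertical line `B_j = {(j, y) : y ∈ F₃}`. -/
def lineB (j : ZMod 3) : Finset Pt := Finset.univ.image (fun y => (j, y))

/-- The line `C_i = {(x, y) : x − y = i}`. -/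
def lineC (i : ZMod 3) : Finset Pt := Finset.univ.filter (fun p => p.1 - p.2 = i)

/-- The line `D_j = {(x, y) : x + y = j}`. -/
def lineD (j : ZMod 3) : Finset Pt := Finset.univ.filter (fun p => p.1 + p.2 = j)

/-- A matroid rank function only when the members of `C` are `r`-sets pairwise meeting in at most
`r - 2` elements; these are then its circuit-hyperplanes. -/
def sparsePavingRank {α : Type*} [DecidableEq α] (r : ℕ) (C : Finset (Finset α))
    (X : Finset α) : ℕ :=
  if X ∈ C then r - 1 else min X.card r

namespace sparsePavingRank

variable {α : Type*} [DecidableEq α] {r : ℕ} {C : Finset (Finset α)} {X : Finset α}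

theorem of_mem (hX : X ∈ C) : sparsePavingRank r C X = r - 1 :=
  if_pos hX

theorem of_notMem (hX : X ∉ C) (hr : r ≤ X.card) : sparsePavingRank r C X = r := by
  rw [sparsePavingRank, if_neg hX, min_eq_right hr]

theorem of_card_lt (hC : ∀ S ∈ C, S.card = r) (hX : X.card < r) :
    sparsePavingRank r C X = X.card := by
  have hXC : X ∉ C := fun hm => (hC X hm ▸ hX).false
  rw [sparsePavingRank, if_neg hXC, min_eq_left hX.le]

theorem of_lt_card (hC : ∀ S ∈ C, S.card = r) (hX : r < X.card) :
    sparsePavingRank r C X = r :=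
  of_notMem (fun hm => (hC X hm ▸ hX).false) hX.le

end sparsePavingRank

theorem notMem_of_lt_card_inter {α : Type*} [DecidableEq α] {C : Finset (Finset α)} {k : ℕ}
    (hmeet : ∀ S ∈ C, ∀ T ∈ C, S ≠ T → (S ∩ T).card ≤ k) {X T : Finset α} (hT : T ∈ C)
    (hXT : X ≠ T) (hk : k < (X ∩ T).card) : X ∉ C :=
  fun hX => (hmeet X hX T hT hXT).not_gt hk

/-- For every TTT matroid of the second kind containing the five listed
circuit-hyperplanes, the contraction by the point `(1,1)` contains a Vámos
configuration; in particular such matroids are not almost entropic. -/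
theorem stmt_19 (C : Finset (Finset Pt))
    (hcard : ∀ S ∈ C, S.card = 5)
    (hmeet : ∀ S ∈ C, ∀ T ∈ C, S ≠ T → (S ∩ T).card ≤ 3)
    (hAB : ∀ i j : ZMod 3, (i, j) ≠ ((0 : ZMod 3), (0 : ZMod 3)) → lineA i ∪ lineB j ∈ C)
    (h1 : lineC 0 ∪ lineD (-1) ∈ C) (h2 : lineC 0 ∪ lineD 0 ∈ C)
    (h3 : lineC 0 ∪ lineD 1 ∈ C) (h4 : lineA 1 ∪ lineB 1 ∈ C)
    (h5 : ((lineA 0 ∪ lineB 0) \ {((0 : ZMod 3), (0 : ZMod 3))}) ∪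
      {((1 : ZMod 3), (1 : ZMod 3))} ∈ C)
    (f : Finset Pt → ℝ)
    (hf : ∀ X : Finset Pt, f X = if X ∈ C then (4 : ℝ) else (min X.card 5 : ℕ))
    (h : Finset Pt → ℝ)
    (hh : ∀ X : Finset Pt, h X = f (X ∪ {((1 : ZMod 3), (1 : ZMod 3))}) - 1) :
    IsVamosConfig h
      {((0 : ZMod 3), (-1 : ZMod 3)), ((-1 : ZMod 3), (0 : ZMod 3))}
      {((0 : ZMod 3), (1 : ZMod 3)), ((1 : ZMod 3), (0 : ZMod 3))}
      {((-1 : ZMod 3), (-1 : ZMod 3)), ((0 : ZMod 3), (0 : ZMod 3))}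
      {((1 : ZMod 3), (-1 : ZMod 3)), ((-1 : ZMod 3), (1 : ZMod 3))} := by
  set p : Pt := (1, 1)
  have h_eq : ∀ X, h X = sparsePavingRank 5 C (X ∪ {p}) - 1 := by
    intro X
    rw [hh, hf, sparsePavingRank]
    split_ifs <;> norm_num
  have h_of_card_eq_three : ∀ X, (X ∪ {p}).card = 3 → h X = 2 := fun X hX => by
    rw [h_eq, sparsePavingRank.of_card_lt hcard (by omega), hX]; norm_num
  have h_of_mem : ∀ X S, X ∪ {p} = S → S ∈ C → h X = 3 := fun X S hXS hS => by
    rw [h_eq, hXS, sparsePavingRank.of_mem hS]; norm_num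
  have h_of_six_le_card : ∀ X, 6 ≤ (X ∪ {p}).card → h X = 4 := fun X hX => by
    rw [h_eq, sparsePavingRank.of_lt_card hcard hX]; norm_num
  have h_L₀L₃ : h ({(0, -1), (-1, 0)} ∪ {(1, -1), (-1, 1)}) = 4 := by
    have hXC : {(0, -1), (-1, 0)} ∪ {(1, -1), (-1, 1)} ∪ {p} ∉ C :=
      notMem_of_lt_card_inter hmeet (hAB (-1) (-1) (by decide)) (by decide) (by decide)
    rw [h_eq, sparsePavingRank.of_notMem hXC (by decide)]; norm_num
  exact ⟨h_of_card_eq_three _ (by decide), h_of_card_eq_three _ (by decide),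
    h_of_card_eq_three _ (by decide), h_of_card_eq_three _ (by decide),
    h_of_mem _ _ (by decide) h5, h_of_mem _ _ (by decide) h1, h_of_mem _ _ (by decide) h3,
    h_of_mem _ _ (by decide) h4, h_of_mem _ _ (by decide) h2, h_L₀L₃,
    h_of_six_le_card _ (by decide), h_of_six_le_card _ (by decide),
    h_of_six_le_card _ (by decide), h_of_six_le_card _ (by decide),
    h_of_six_le_card _ (by decide)⟩
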